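/- Let L, λ̃ > 0, let p : ℝ² → ℝ be a C^∞ function solving the observer kernel model (p-model) with parameter λ̃, and assume α := λ̃ - (1/2) ∫_0^L (∂_x p)(L,y)² dy > 0. Let w : ℝ² → ℝ be a C^∞ smooth solution of the target error system. Then for all t ≥ 0: ( ∫_0^L w(x,t)² dx )^{1/2} ≤ ( ∫_0^L w(x,0)² dx )^{1/2} · e^{-α t}. -/

import Mathlib

open MeasureTheory Real

/-- Partial derivative in the first variable. -/
noncomputable def pd1 (f : ℝ × ℝ → ℝ) : ℝ × ℝ → ℝ := fun q => deriv (fun s => f (s, q.2)) q.1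

/-- Partial derivative in the second variable. -/
noncomputable def pd2 (f : ℝ × ℝ → ℝ) : ℝ × ℝ → ℝ := fun q => deriv (fun s => f (q.1, s)) q.2

/-- `p` solves the observer kernel model (p-model) with parameter `lt` on the triangle `Δ_L`. -/
def SolvesPEq (L lt : ℝ) (p : ℝ × ℝ → ℝ) : Prop :=
  (∀ x y : ℝ, 0 ≤ y → y ≤ x → x ≤ L →
      pd1 (pd1 (pd1 p)) (x, y) + pd2 (pd2 (pd2 p)) (x, y) + pd1 p (x, y) + pd2 p (x, y)
        = lt * p (x, y)) ∧
  (∀ y : ℝ, 0 ≤ y → y ≤ L → p (L, y) = 0) ∧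
  (∀ x : ℝ, 0 ≤ x → x ≤ L → p (x, x) = 0) ∧
  (∀ x : ℝ, 0 ≤ x → x ≤ L → pd1 p (x, x) = -(lt * (x - L)) / 3)

/-- `w` (arguments `(x,t)`) is a smooth solution of the target error system. -/
def TargetErr (L lt : ℝ) (p w : ℝ × ℝ → ℝ) : Prop :=
  (∀ x t : ℝ, 0 ≤ x → x ≤ L → 0 ≤ t →
      pd2 w (x, t) + pd1 w (x, t) + pd1 (pd1 (pd1 w)) (x, t) + lt * w (x, t) = 0) ∧
  (∀ t : ℝ, 0 ≤ t → w (0, t) = 0) ∧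
  (∀ t : ℝ, 0 ≤ t → w (L, t) = 0) ∧
  (∀ t : ℝ, 0 ≤ t → pd1 w (L, t) = ∫ y in (0:ℝ)..L, pd1 p (L, y) * w (y, t))

/- ===== auxiliary lemmas ===== -/

lemma hasDerivAt_pd1 {f : ℝ × ℝ → ℝ} (hf : ContDiff ℝ (⊤ : ℕ∞) f) (x y : ℝ) :
    HasDerivAt (fun s => f (s, y)) (pd1 f (x, y)) x := by
  have h1 : HasDerivAt (fun s : ℝ => (s, y)) ((1 : ℝ), (0 : ℝ)) x :=
    (hasDerivAt_id x).prodMk (hasDerivAt_const x y)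
  have := (hf.differentiable (by simp) (x, y)).hasFDerivAt.comp_hasDerivAt x h1
  have e : pd1 f (x, y) = fderiv ℝ f (x, y) ((1 : ℝ), (0 : ℝ)) := by
    simpa [pd1, Function.comp_def] using this.deriv
  rw [e]; exact this

lemma hasDerivAt_pd2 {f : ℝ × ℝ → ℝ} (hf : ContDiff ℝ (⊤ : ℕ∞) f) (x y : ℝ) :
    HasDerivAt (fun s => f (x, s)) (pd2 f (x, y)) y := by
  have h1 : HasDerivAt (fun s : ℝ => (x, s)) ((0 : ℝ), (1 : ℝ)) y :=
    (hasDerivAt_const y x).prodMk (hasDerivAt_id y)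
  have := (hf.differentiable (by simp) (x, y)).hasFDerivAt.comp_hasDerivAt y h1
  have e : pd2 f (x, y) = fderiv ℝ f (x, y) ((0 : ℝ), (1 : ℝ)) := by
    simpa [pd2, Function.comp_def] using this.deriv
  rw [e]; exact this

lemma pd1_eq_fderiv {f : ℝ × ℝ → ℝ} (hf : ContDiff ℝ (⊤ : ℕ∞) f) :
    pd1 f = fun q => fderiv ℝ f q ((1 : ℝ), (0 : ℝ)) := by
  funext q
  have h1 : HasDerivAt (fun s : ℝ => (s, q.2)) ((1 : ℝ), (0 : ℝ)) q.1 :=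
    (hasDerivAt_id q.1).prodMk (hasDerivAt_const q.1 q.2)
  have := (hf.differentiable (by simp) q).hasFDerivAt.comp_hasDerivAt q.1 h1
  simpa [pd1, Function.comp_def] using this.deriv

lemma pd2_eq_fderiv {f : ℝ × ℝ → ℝ} (hf : ContDiff ℝ (⊤ : ℕ∞) f) :
    pd2 f = fun q => fderiv ℝ f q ((0 : ℝ), (1 : ℝ)) := by
  funext q
  have h1 : HasDerivAt (fun s : ℝ => (q.1, s)) ((0 : ℝ), (1 : ℝ)) q.2 :=
    (hasDerivAt_const q.2 q.1).prodMk (hasDerivAt_id q.2)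
  have := (hf.differentiable (by simp) q).hasFDerivAt.comp_hasDerivAt q.2 h1
  simpa [pd2, Function.comp_def] using this.deriv

lemma contDiff_pd1 {f : ℝ × ℝ → ℝ} (hf : ContDiff ℝ (⊤ : ℕ∞) f) : ContDiff ℝ (⊤ : ℕ∞) (pd1 f) := by
  rw [pd1_eq_fderiv hf]
  exact (hf.fderiv_right (by simp)).clm_apply contDiff_const

lemma contDiff_pd2 {f : ℝ × ℝ → ℝ} (hf : ContDiff ℝ (⊤ : ℕ∞) f) : ContDiff ℝ (⊤ : ℕ∞) (pd2 f) := by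
  rw [pd2_eq_fderiv hf]
  exact (hf.fderiv_right (by simp)).clm_apply contDiff_const

lemma hasDerivAt_intParam {F : ℝ × ℝ → ℝ} (hF : ContDiff ℝ (⊤ : ℕ∞) F) (L t₀ : ℝ) :
    HasDerivAt (fun t => ∫ x in (0:ℝ)..L, F (x, t)) (∫ x in (0:ℝ)..L, pd2 F (x, t₀)) t₀ := by
  have hc2 : Continuous (pd2 F) := (contDiff_pd2 hF).continuous
  obtain ⟨C, hC⟩ : ∃ C, ∀ q ∈ (Set.uIcc (0:ℝ) L ×ˢ Set.Icc (t₀ - 1) (t₀ + 1)), ‖pd2 F q‖ ≤ C :=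
    (isCompact_uIcc.prod isCompact_Icc).exists_bound_of_continuousOn hc2.continuousOn
  have := (intervalIntegral.hasDerivAt_integral_of_dominated_loc_of_deriv_le
      (F := fun t x => F (x, t)) (F' := fun t x => pd2 F (x, t)) (x₀ := t₀)
      (a := 0) (b := L) (μ := volume) (bound := fun _ => C) (s := Metric.ball t₀ 1) (Metric.ball_mem_nhds t₀ one_pos)
      ?_ ?_ ?_ ?_ ?_ ?_).2
  · exact this
  · exact Filter.Eventually.of_forall fun t =>
      (hF.continuous.comp (continuous_id.prodMk continuous_const)).aestronglyMeasurable
  · exact ((hF.continuous.comp (continuous_id.prodMk continuous_const)).intervalIntegrable 0 L)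
  · exact (hc2.comp (continuous_id.prodMk continuous_const)).aestronglyMeasurable
  · refine Filter.Eventually.of_forall fun x hx t ht => hC _ ⟨?_, ?_⟩
    · exact Set.uIoc_subset_uIcc hx
    · have := Metric.mem_ball.mp ht
      rw [Real.dist_eq] at this
      constructor <;> [linarith [abs_lt.mp this]; linarith [abs_lt.mp this]]
  · exact intervalIntegrable_const
  · exact Filter.Eventually.of_forall fun x hx t ht => hasDerivAt_pd2 hF x t

lemma cs_interval {f g : ℝ → ℝ} (hf : Continuous f) (hg : Continuous g) {L : ℝ} (hL : 0 ≤ L) :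
    (∫ x in (0:ℝ)..L, f x * g x) ^ 2
      ≤ (∫ x in (0:ℝ)..L, f x ^ 2) * (∫ x in (0:ℝ)..L, g x ^ 2) := by
  set A := ∫ x in (0:ℝ)..L, f x ^ 2 with hA
  set B := ∫ x in (0:ℝ)..L, f x * g x with hB
  set C := ∫ x in (0:ℝ)..L, g x ^ 2 with hC
  have key : ∀ u : ℝ, 0 ≤ A * u ^ 2 + (2 * B) * u + C := by
    intro u
    have h1 : ∀ x : ℝ, (u * f x + g x) ^ 2
        = u ^ 2 * f x ^ 2 + (2 * u) * (f x * g x) + g x ^ 2 := by intro x; ring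
    have hint : (∫ x in (0:ℝ)..L, (u * f x + g x) ^ 2)
        = u ^ 2 * A + (2 * u) * B + C := by
      rw [intervalIntegral.integral_congr (g := fun x =>
        u ^ 2 * f x ^ 2 + (2 * u) * (f x * g x) + g x ^ 2) (fun x _ => h1 x)]
      rw [intervalIntegral.integral_add, intervalIntegral.integral_add,
        intervalIntegral.integral_const_mul, intervalIntegral.integral_const_mul]
      · exact ((continuous_const.mul (hf.pow 2))).intervalIntegrable 0 L
      · exact ((continuous_const.mul (hf.mul hg))).intervalIntegrable 0 L
      · exact ((continuous_const.mul (hf.pow 2)).add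
          (continuous_const.mul (hf.mul hg))).intervalIntegrable 0 L
      · exact (hg.pow 2).intervalIntegrable 0 L
    have hnn : 0 ≤ ∫ x in (0:ℝ)..L, (u * f x + g x) ^ 2 :=
      intervalIntegral.integral_nonneg hL (fun x _ => sq_nonneg _)
    rw [hint] at hnn; nlinarith
  have key' : ∀ u : ℝ, 0 ≤ A * (u * u) + (2 * B) * u + C := by
    intro u; have := key u; nlinarith
  have := discrim_le_zero key'
  rw [discrim] at this
  nlinarith

lemma gronwall_exp {E E' : ℝ → ℝ} {β : ℝ} (hE : ∀ t, HasDerivAt E (E' t) t)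
    (hb : ∀ t, 0 ≤ t → E' t ≤ -β * E t) :
    ∀ t, 0 ≤ t → E t ≤ E 0 * Real.exp (-β * t) := by
  intro t ht
  set g : ℝ → ℝ := fun t => E t * Real.exp (β * t) with hg
  have hg' : ∀ s, HasDerivAt g (E' s * Real.exp (β * s) + E s * (Real.exp (β * s) * β)) s := by
    intro s
    have h2 : HasDerivAt (fun t => Real.exp (β * t)) (Real.exp (β * s) * β) s := by
      simpa using (((hasDerivAt_id s).const_mul β).exp)
    exact (hE s).mul h2
  have hanti : AntitoneOn g (Set.Ici 0) := by
    apply antitoneOn_of_deriv_nonpos (convex_Ici 0)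
    · exact (fun s _ => ((hg' s).differentiableAt.continuousAt.continuousWithinAt))
    · exact fun s _ => (hg' s).differentiableAt.differentiableWithinAt
    · intro s hs
      rw [interior_Ici] at hs
      rw [(hg' s).deriv]
      have := hb s (le_of_lt hs)
      nlinarith [Real.exp_pos (β * s)]
  have h0 : g t ≤ g 0 := hanti (Set.self_mem_Ici) ht ht
  have hgt : g t = E t * Real.exp (β * t) := rfl
  have hg0 : g 0 = E 0 := by simp [hg]
  rw [hgt, hg0] at h0
  have : E t = E t * Real.exp (β * t) * Real.exp (-β * t) := by
    rw [mul_assoc, ← Real.exp_add]; ring_nf; simp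
  rw [this]
  exact mul_le_mul_of_nonneg_right h0 (le_of_lt (Real.exp_pos _))

/-- exponential `L²` decay of smooth solutions of the target error system. -/
theorem stmt_6 (L lt : ℝ) (hL : 0 < L) (hlt : 0 < lt)
    (p : ℝ × ℝ → ℝ) (hp : ContDiff ℝ (⊤ : ℕ∞) p) (hpEq : SolvesPEq L lt p)
    (hα : 0 < lt - (1 / 2) * ∫ y in (0:ℝ)..L, (pd1 p (L, y)) ^ 2)
    (w : ℝ × ℝ → ℝ) (hw : ContDiff ℝ (⊤ : ℕ∞) w) (hwEq : TargetErr L lt p w) :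
    ∀ t : ℝ, 0 ≤ t →
      Real.sqrt (∫ x in (0:ℝ)..L, w (x, t) ^ 2)
        ≤ Real.sqrt (∫ x in (0:ℝ)..L, w (x, 0) ^ 2) *
            Real.exp (-(lt - (1 / 2) * ∫ y in (0:ℝ)..L, (pd1 p (L, y)) ^ 2) * t) := by
  obtain ⟨hpde, hw0, hwL, hwx⟩ := hwEq
  set K := ∫ y in (0:ℝ)..L, (pd1 p (L, y)) ^ 2 with hKdef
  set α := lt - (1 / 2) * K with hαdef
  have hw1 : ContDiff ℝ (⊤ : ℕ∞) (pd1 w) := contDiff_pd1 hw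
  have hw2 : ContDiff ℝ (⊤ : ℕ∞) (pd1 (pd1 w)) := contDiff_pd1 hw1
  have hw3 : ContDiff ℝ (⊤ : ℕ∞) (pd1 (pd1 (pd1 w))) := contDiff_pd1 hw2
  have hcw : Continuous w := hw.continuous
  have hcw1 : Continuous (pd1 w) := hw1.continuous
  have hcw2 : Continuous (pd1 (pd1 w)) := hw2.continuous
  have hcw3 : Continuous (pd1 (pd1 (pd1 w))) := hw3.continuous
  have hcwt : Continuous (pd2 w) := (contDiff_pd2 hw).continuous
  set E : ℝ → ℝ := fun t => ∫ x in (0:ℝ)..L, w (x, t) ^ 2 with hEdef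
  set E' : ℝ → ℝ := fun t => ∫ x in (0:ℝ)..L, 2 * w (x, t) * pd2 w (x, t) with hE'def
  -- E has derivative E'
  have hEd : ∀ t, HasDerivAt E (E' t) t := by
    intro t
    have h := hasDerivAt_intParam (F := fun q => w q ^ 2) (hw.pow 2) L t
    have hcong : (∫ x in (0:ℝ)..L, pd2 (fun q => w q ^ 2) (x, t)) = E' t := by
      apply intervalIntegral.integral_congr
      intro x _
      have h2 := (hasDerivAt_pd2 hw x t).fun_pow 2
      have := h2.deriv
      simpa [pd2] using this
    rw [hcong] at h
    exact h
  -- the derivative identity for t ≥ 0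
  have hDer : ∀ t, 0 ≤ t →
      E' t = -(2 * lt) * E t + (pd1 w (L, t)) ^ 2 - (pd1 w (0, t)) ^ 2 := by
    intro t ht
    have cxt : Continuous (fun x : ℝ => (x, t)) := continuous_id.prodMk continuous_const
    have hcI : Continuous (fun x => 2 * w (x, t) * pd1 w (x, t)
        + 2 * w (x, t) * pd1 (pd1 (pd1 w)) (x, t)) :=
      ((continuous_const.mul (hcw.comp cxt)).mul (hcw1.comp cxt)).add
        ((continuous_const.mul (hcw.comp cxt)).mul (hcw3.comp cxt))
    set G : ℝ → ℝ := fun x =>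
      w (x, t) ^ 2 + 2 * w (x, t) * pd1 (pd1 w) (x, t) - (pd1 w (x, t)) ^ 2 with hGdef
    have hG : ∀ x, HasDerivAt G
        (2 * w (x, t) * pd1 w (x, t) + 2 * w (x, t) * pd1 (pd1 (pd1 w)) (x, t)) x := by
      intro x
      have h0 := hasDerivAt_pd1 hw x t
      have h1 := hasDerivAt_pd1 hw1 x t
      have h2 := hasDerivAt_pd1 hw2 x t
      have hh := ((h0.fun_pow 2).fun_add ((h0.const_mul 2).fun_mul h2)).fun_sub (h1.fun_pow 2)
      refine hh.congr_deriv ?_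
      push_cast
      ring
    have hFTC : (∫ x in (0:ℝ)..L,
        (2 * w (x, t) * pd1 w (x, t) + 2 * w (x, t) * pd1 (pd1 (pd1 w)) (x, t)))
        = G L - G 0 := by
      exact intervalIntegral.integral_eq_sub_of_hasDerivAt (fun x _ => hG x)
        (hcI.intervalIntegrable 0 L)
    have hGL : G L = -(pd1 w (L, t)) ^ 2 := by
      simp [hGdef, hwL t ht]
    have hG0 : G 0 = -(pd1 w (0, t)) ^ 2 := by
      simp [hGdef, hw0 t ht]
    have hsplit : E' t = (∫ x in (0:ℝ)..L, (-(2 * lt)) * w (x, t) ^ 2)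
        - ∫ x in (0:ℝ)..L,
          (2 * w (x, t) * pd1 w (x, t) + 2 * w (x, t) * pd1 (pd1 (pd1 w)) (x, t)) := by
      rw [hE'def]
      rw [← intervalIntegral.integral_sub]
      · apply intervalIntegral.integral_congr
        intro x hx
        rw [Set.uIcc_of_le hL.le] at hx
        have hpd := hpde x t hx.1 hx.2 ht
        have : pd2 w (x, t) = -(pd1 w (x, t) + pd1 (pd1 (pd1 w)) (x, t) + lt * w (x, t)) := by
          linarith
        simp only []
        rw [this]; ring
      · exact (continuous_const.mul ((hcw.comp cxt).pow 2)).intervalIntegrable 0 L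
      · exact hcI.intervalIntegrable 0 L
    rw [hsplit, hFTC, hGL, hG0, intervalIntegral.integral_const_mul]
    rw [hEdef]
    ring
  -- nonnegativity of E
  have hEnn : ∀ t, 0 ≤ E t := fun t =>
    intervalIntegral.integral_nonneg hL.le (fun x _ => sq_nonneg _)
  -- derivative bound
  have hb : ∀ t, 0 ≤ t → E' t ≤ -(2 * α) * E t := by
    intro t ht
    have hcs : (pd1 w (L, t)) ^ 2 ≤ K * E t := by
      rw [hwx t ht]
      exact cs_interval
        ((contDiff_pd1 hp).continuous.comp (continuous_const.prodMk continuous_id))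
        (hcw.comp (continuous_id.prodMk continuous_const)) hL.le
    rw [hDer t ht]
    have h0 := sq_nonneg (pd1 w (0, t))
    rw [hαdef]
    nlinarith
  have hfinal := gronwall_exp hEd hb
  intro t ht
  have hEt := hfinal t ht
  have h1 : Real.sqrt (E t) ≤ Real.sqrt (E 0 * Real.exp (-(2 * α) * t)) :=
    Real.sqrt_le_sqrt hEt
  have h2 : Real.sqrt (E 0 * Real.exp (-(2 * α) * t))
      = Real.sqrt (E 0) * Real.exp (-α * t) := by
    rw [Real.sqrt_mul (hEnn 0)]
    congr 1
    rw [show -(2 * α) * t = (-α * t) + (-α * t) by ring, Real.exp_add]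
    exact Real.sqrt_mul_self (le_of_lt (Real.exp_pos _))
  calc Real.sqrt (E t) ≤ Real.sqrt (E 0) * Real.exp (-α * t) := h2 ▸ h1
    _ = _ := by rw [hαdef]
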